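/- Let d ≥ 1 and let O_+ be the diagonal matrix indexed by a : Fin 3 → Fin d with diagonal entry (d+1)(d+2)·[a0 = a1 ∧ a1 = a2] − (d+1)·([a0 = a1] + [a1 = a2] + [a0 = a2]) + 2, where [·] is the 0/1 indicator. Then for every permutation π of Fin 3, Tr[O_+ · W_π] = Tr[(W_c + W_{c⁻¹}) · W_π], where c is the 3-cycle (0 1 2). (This is the trace-matching condition proving that the computational-basis post-processing O_+ reproduces the symmetrized cyclic operator M_+ = W_c + W_{c⁻¹} under twirling.) -/

import Mathlib

open Matrix

noncomputable section

/-- Permutation operator `W_π` of local index `I`: `W_π[b,a] = 1` iff `b = a ∘ π`. -/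
def permOp (I : Type*) [DecidableEq I] {t : ℕ} (π : Equiv.Perm (Fin t)) :
    Matrix (Fin t → I) (Fin t → I) ℂ :=
  Matrix.of fun b a => if b = a ∘ ⇑π then 1 else 0

/-- the 3-cycle (0 1 2) of `Fin 3` -/
def c3 : Equiv.Perm (Fin 3) := finRotate 3

/-- The post-processing observable `O₊`, diagonal in the computational basis. -/
def Oplus (d : ℕ) : Matrix (Fin 3 → Fin d) (Fin 3 → Fin d) ℂ :=
  Matrix.diagonal fun a =>
    ((d : ℂ) + 1) * ((d : ℂ) + 2) * (if a 0 = a 1 ∧ a 1 = a 2 then 1 else 0)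
      - ((d : ℂ) + 1) * ((if a 0 = a 1 then 1 else 0) + (if a 1 = a 2 then 1 else 0)
          + (if a 0 = a 2 then 1 else 0))
      + 2

/-! Since `W_σ W_π = W_{πσ}` and `O₊` is diagonal, both traces are sums over the assignments
`a` fixed by `π`: `Tr[O₊ W_π] = ∑_{a ∘ π = a} O₊(a)` and `Tr[W_τ] = #{a | a ∘ τ = a}`. Counting
triples with prescribed coincidences, both sides equal `2d` for `π = 1`, `2d²` for a transposition
and `d³ + d` for a 3-cycle. -/

section PermOp

variable {I : Type*} [DecidableEq I] {t : ℕ}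

theorem permOp_apply (π : Equiv.Perm (Fin t)) (b a : Fin t → I) :
    permOp I π b a = if b = a ∘ π then 1 else 0 := rfl

variable [Fintype I]

theorem permOp_mul_permOp (σ π : Equiv.Perm (Fin t)) :
    permOp I σ * permOp I π = permOp I (π * σ) := by
  ext b a
  simp only [mul_apply, permOp_apply, mul_ite, mul_one, mul_zero, Finset.sum_ite_eq',
    Finset.mem_univ, if_true]
  rfl

theorem trace_diagonal_mul_permOp (f : (Fin t → I) → ℂ) (π : Equiv.Perm (Fin t)) :
    (diagonal f * permOp I π).trace = ∑ a with a = a ∘ π, f a := by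
  simp [trace, permOp_apply, Finset.sum_filter]

theorem trace_permOp (π : Equiv.Perm (Fin t)) :
    (permOp I π).trace = ∑ a : Fin t → I with a = a ∘ π, 1 := by
  rw [← trace_diagonal_mul_permOp, diagonal_one, one_mul]

end PermOp

theorem Fintype.sum_fun_fin_succ {α M : Type*} [Fintype α] [AddCommMonoid M] {n : ℕ}
    (F : (Fin (n + 1) → α) → M) :
    ∑ a, F a = ∑ x, ∑ a : Fin n → α, F (Fin.cons x a) := by
  rw [← Fintype.sum_prod_type']
  exact (Fintype.sum_equiv (Fin.consEquiv fun _ => α) _ _ fun _ => rfl).symm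

theorem Fintype.sum_fun_fin_three {α M : Type*} [Fintype α] [AddCommMonoid M]
    (F : (Fin 3 → α) → M) :
    ∑ a, F a = ∑ x, ∑ y, ∑ z, F ![x, y, z] := by
  simp only [Fintype.sum_fun_fin_succ, Fintype.sum_unique]
  rfl

section VecThree

variable {α : Type*} (x y z : α)

/- Propositional copies of `Matrix.cons_val_zero` etc.: simp rewrites with those `rfl` lemmas
inside the condition of an `ite` without updating its `Decidable` instance, which then blocks
`Finset.sum_ite_eq`. -/
theorem vecThree_apply_zero : ![x, y, z] 0 = x := by simp

theorem vecThree_apply_one : ![x, y, z] 1 = y := by simp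

theorem vecThree_apply_two : ![x, y, z] 2 = z := by simp

end VecThree

theorem comp_perm_eq_self_iff_fin_three {α : Type*} (a : Fin 3 → α) (π : Equiv.Perm (Fin 3)) :
    a = a ∘ π ↔ a 0 = a (π 0) ∧ a 1 = a (π 1) ∧ a 2 = a (π 2) := by
  simp [funext_iff, Fin.forall_fin_succ]

theorem c3_apply (i : Fin 3) : c3 i = i + 1 := by decide +revert

theorem c3_inv_apply (i : Fin 3) : c3⁻¹ i = i - 1 := by decide +revert

theorem stmt_6_general (d : ℕ) (π : Equiv.Perm (Fin 3)) :
    (Oplus d * permOp (Fin d) π).trace =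
      ((permOp (Fin d) c3 + permOp (Fin d) c3⁻¹) * permOp (Fin d) π).trace := by
  rw [Oplus, trace_diagonal_mul_permOp, Matrix.add_mul, trace_add, permOp_mul_permOp,
    permOp_mul_permOp, trace_permOp, trace_permOp]
  obtain rfl | rfl | rfl | rfl | rfl | rfl : π = 1 ∨ π = c3 ∨ π = c3⁻¹ ∨ π = Equiv.swap 0 1 ∨
      π = Equiv.swap 0 2 ∨ π = Equiv.swap 1 2 := by revert π; decide
  all_goals
    simp only [Finset.sum_filter, Fintype.sum_fun_fin_three, comp_perm_eq_self_iff_fin_three,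
      Equiv.Perm.mul_apply, Equiv.Perm.one_apply, c3_apply, c3_inv_apply, Equiv.swap_apply_left,
      Equiv.swap_apply_right, Equiv.swap_apply_of_ne_of_ne, ne_eq, Fin.reduceEq, not_false_eq_true,
      Fin.reduceAdd, Fin.reduceSub, vecThree_apply_zero, vecThree_apply_one, vecThree_apply_two]
    simp only [ite_and, Finset.sum_ite_irrel, Finset.sum_ite_eq, Finset.sum_ite_eq',
      Finset.mem_univ, if_true, Finset.sum_add_distrib, Finset.sum_sub_distrib, ← Finset.mul_sum,
      mul_zero, Finset.sum_const, Finset.card_univ, Fintype.card_fin, nsmul_eq_mul]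
    ring

theorem stmt_6 (d : ℕ) (hd : 1 ≤ d) (π : Equiv.Perm (Fin 3)) :
    (Oplus d * permOp (Fin d) π).trace =
      ((permOp (Fin d) c3 + permOp (Fin d) c3⁻¹) * permOp (Fin d) π).trace :=
  stmt_6_general d π
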